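/- For any odd integer n ≥ 3, the equidistant dimension of the prism graph C_n □ K_2 equals n. -/

import Mathlib

open SimpleGraph

/-- A distance-equalizer set: any two vertices outside `D` are equidistant
from some vertex of `D`. -/
def IsDistEqSet {V : Type*} (G : SimpleGraph V) (D : Set V) : Prop :=
  ∀ x ∉ D, ∀ y ∉ D, ∃ w ∈ D, G.dist x w = G.dist y w

/-- The equidistant dimension: minimum cardinality of a distance-equalizer set. -/
noncomputable def eqdim {V : Type*} [Fintype V] (G : SimpleGraph V) : ℕ :=
  sInf {k | ∃ D : Finset V, IsDistEqSet G (D : Set V) ∧ D.card = k}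

/-! In the prism `G □ K₂` the two vertices `(a, 0)` and `(a, 1)` have distances differing by one
from every vertex, so an equalizer set meets every fibre and has at least `|G|` elements.
Conversely one layer `G × {0}` is an equalizer set as soon as any two vertices of `G` have a
common equidistant vertex; in an odd cycle this is `(a + b) / 2`, the fixed point of the
reflection of the cycle that swaps `a` and `b`. -/

namespace SimpleGraph

variable {V W : Type*} {G : SimpleGraph V} {H : SimpleGraph W}

theorem Hom.edist_map_le (f : G →g H) (u v : V) : H.edist (f u) (f v) ≤ G.edist u v := by
  by_cases huv : G.edist u v = ⊤
  · simp [huv]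
  obtain ⟨p, hp⟩ := exists_walk_of_edist_ne_top huv
  calc H.edist (f u) (f v) ≤ (p.map f).length := edist_le _
    _ = G.edist u v := by rw [Walk.length_map, hp]

theorem Iso.dist_map (f : G ≃g H) (u v : V) : H.dist (f u) (f v) = G.dist u v := by
  have hle : G.edist (f.symm (f u)) (f.symm (f v)) ≤ H.edist (f u) (f v) :=
    f.symm.toHom.edist_map_le _ _
  rw [f.symm_apply_apply, f.symm_apply_apply] at hle
  exact congrArg ENat.toNat (le_antisymm (f.toHom.edist_map_le u v) hle)

theorem dist_boxProd (hG : G.Connected) (hH : H.Connected) (x y : V × W) :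
    (G □ H).dist x y = G.dist x.1 y.1 + H.dist x.2 y.2 := by
  have h := edist_boxProd (G := G) (H := H) x y
  rw [← ((hG.boxProd hH) x y).coe_dist_eq_edist, ← (hG x.1 y.1).coe_dist_eq_edist,
    ← (hH x.2 y.2).coe_dist_eq_edist] at h
  exact_mod_cast h

def cycleGraph.reflection (n : ℕ) [NeZero n] (s : Fin n) : cycleGraph n ≃g cycleGraph n where
  toEquiv := Equiv.subLeft s
  map_rel_iff' := by
    intro u v
    simp only [Equiv.subLeft_apply, cycleGraph_adj', sub_sub_sub_cancel_left]
    exact or_comm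

theorem cycleGraph.exists_dist_eq_dist_of_odd {n : ℕ} (hn : Odd n) (a b : Fin n) :
    ∃ c, (cycleGraph n).dist a c = (cycleGraph n).dist b c := by
  have : NeZero n := ⟨hn.pos.ne'⟩
  -- `(n + 1) / 2` inverts `2` modulo `n`, so `c = (a + b) / 2`.
  set c := ((n + 1) / 2) • (a + b)
  have hc : c + c = a + b := by
    rw [← two_nsmul, smul_smul, Nat.mul_div_cancel' (hn.add_odd odd_one).two_dvd,
      succ_nsmul, show n • (a + b) = 0 by simpa using card_nsmul_eq_zero (x := a + b), zero_add]
  refine ⟨c, ?_⟩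
  have := (cycleGraph.reflection n (a + b)).dist_map a c
  simp only [cycleGraph.reflection, RelIso.coe_fn_mk, Equiv.subLeft_apply,
    add_sub_cancel_left] at this
  rw [← this, ← hc, add_sub_cancel_right]

end SimpleGraph

theorem eqdim_eq_card_of_isDistEqSet {V : Type*} [Fintype V] {G : SimpleGraph V} {D : Finset V}
    (hD : IsDistEqSet G D) (hmin : ∀ D' : Finset V, IsDistEqSet G D' → D.card ≤ D'.card) :
    eqdim G = D.card :=
  le_antisymm (Nat.sInf_le ⟨D, hD, rfl⟩) <| le_csInf ⟨_, D, hD, rfl⟩ <| by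
    rintro _ ⟨D', hD', rfl⟩
    exact hmin D' hD'

section Prism

variable {V : Type*} {G : SimpleGraph V}

theorem IsDistEqSet.mem_or_mem_of_boxProd_top (hG : G.Connected) {D : Set (V × Fin 2)}
    (hD : IsDistEqSet (G □ ⊤) D) (a : V) : (a, 0) ∈ D ∨ (a, 1) ∈ D := by
  by_contra! h
  obtain ⟨⟨c, j⟩, -, heq⟩ := hD (a, 0) h.1 (a, 1) h.2
  rw [dist_boxProd hG connected_top, dist_boxProd hG connected_top] at heq
  fin_cases j <;> simp [dist_top] at heq

theorem IsDistEqSet.card_le_card_of_boxProd_top [Fintype V] (hG : G.Connected)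
    {D : Finset (V × Fin 2)} (hD : IsDistEqSet (G □ ⊤) (D : Set (V × Fin 2))) :
    Fintype.card V ≤ D.card :=
  Finset.card_le_card_of_surjOn Prod.fst fun a _ =>
    (hD.mem_or_mem_of_boxProd_top hG a).elim (fun h => ⟨_, h, rfl⟩) (fun h => ⟨_, h, rfl⟩)

theorem isDistEqSet_boxProd_top_layer (hG : G.Connected)
    (hmid : ∀ a b : V, ∃ c, G.dist a c = G.dist b c) (i : Fin 2) :
    IsDistEqSet (G □ ⊤) {x | x.2 = i} := by
  intro x (hx : x.2 ≠ i) y (hy : y.2 ≠ i)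
  have hxy : x.2 = y.2 := by omega
  obtain ⟨c, hc⟩ := hmid x.1 y.1
  refine ⟨(c, i), rfl, ?_⟩
  rw [dist_boxProd hG connected_top, dist_boxProd hG connected_top, hc, hxy]

end Prism

theorem stmt_11_general (n : ℕ) (hodd : Odd n) :
    eqdim (cycleGraph n □ (⊤ : SimpleGraph (Fin 2))) = n := by
  obtain ⟨k, rfl⟩ := Nat.exists_eq_add_one.mpr hodd.pos
  have hG : (cycleGraph (k + 1)).Connected := cycleGraph_connected
  let D : Finset (Fin (k + 1) × Fin 2) := Finset.univ ×ˢ {0}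
  have hD : IsDistEqSet (cycleGraph (k + 1) □ ⊤) (D : Set (Fin (k + 1) × Fin 2)) := by
    convert isDistEqSet_boxProd_top_layer hG (cycleGraph.exists_dist_eq_dist_of_odd hodd) 0
    ext x
    simp [D, Prod.ext_iff, eq_comm]
  have hcard : D.card = k + 1 := by simp [D]
  refine (eqdim_eq_card_of_isDistEqSet hD fun D' hD' => ?_).trans hcard
  simpa [hcard] using hD'.card_le_card_of_boxProd_top hG

theorem stmt_11 (n : ℕ) (hn : 3 ≤ n) (hodd : Odd n) :
    eqdim (cycleGraph n □ (⊤ : SimpleGraph (Fin 2))) = n :=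
  stmt_11_general n hodd
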